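/- Let S be a closed 2n-manifold, Γ ⊆ S a hypersurface, u : S → ℝ a smooth function with Γ = u^{−1}(0) a regular level set, and β a 1-form on S such that β restricted to Γ is a contact form and d(β/u) is symplectic on S \ Γ. Then the 1-form α = u dt + β on S × ℝ (t the ℝ-coordinate) is a contact form, the vector field ∂/∂t satisfies L_{∂/∂t} α = 0 and is transverse to each S × {t}, and α restricts to β on each slice S × {t}. -/

import Mathlib

noncomputable section Stmt9

/-- The exterior derivative of a 1-form on constant tangent vectors. -/
def dform {M : Type*} [NormedAddCommGroup M] [NormedSpace ℝ M]
    (α : M → M →L[ℝ] ℝ) (x : M) (u w : M) : ℝ :=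
  fderiv ℝ (fun y => α y w) x u - fderiv ℝ (fun y => α y u) x w

/-- The 1-form `α = u dt + β` on `S × ℝ`. -/
def udtβ {S : Type*} [NormedAddCommGroup S] [NormedSpace ℝ S]
    (u : S → ℝ) (β : S → S →L[ℝ] ℝ) (z : S × ℝ) : (S × ℝ) →L[ℝ] ℝ :=
  u z.1 • ContinuousLinearMap.snd ℝ S ℝ + (β z.1).comp (ContinuousLinearMap.fst ℝ S ℝ)

section Aux

variable {S : Type*} [NormedAddCommGroup S] [NormedSpace ℝ S]

lemma udtβ_apply (u : S → ℝ) (β : S → S →L[ℝ] ℝ) (z w : S × ℝ) :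
    udtβ u β z w = u z.1 * w.2 + β z.1 w.1 := by
  simp [udtβ]

lemma diff_beta_apply {β : S → S →L[ℝ] ℝ} (hβ : Differentiable ℝ β) (w : S) :
    Differentiable ℝ (fun y => β y w) :=
  fun x => (hβ x).clm_apply (differentiableAt_const w)

lemma fderiv_udtβ_eval {u : S → ℝ} (hu : Differentiable ℝ u)
    {β : S → S →L[ℝ] ℝ} (hβ : Differentiable ℝ β) (z W W' : S × ℝ) :
    fderiv ℝ (fun y => udtβ u β y W') z W =
      fderiv ℝ u z.1 W.1 * W'.2 + fderiv ℝ (fun y => β y W'.1) z.1 W.1 := by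
  have h1 : HasFDerivAt (fun y : S × ℝ => u y.1)
      ((fderiv ℝ u z.1).comp (ContinuousLinearMap.fst ℝ S ℝ)) z :=
    (hu z.1).hasFDerivAt.comp z (hasFDerivAt_fst)
  have h3 : HasFDerivAt (fun y : S × ℝ => β y.1 W'.1)
      ((fderiv ℝ (fun y => β y W'.1) z.1).comp (ContinuousLinearMap.fst ℝ S ℝ)) z :=
    (diff_beta_apply hβ W'.1 z.1).hasFDerivAt.comp z (hasFDerivAt_fst)
  have h4 := (h1.mul_const W'.2).add h3
  have heq : (fun y => udtβ u β y W') = fun y : S × ℝ => u y.1 * W'.2 + β y.1 W'.1 := by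
    funext y; exact udtβ_apply u β y W'
  rw [heq, HasFDerivAt.fderiv (f := fun y : S × ℝ => u y.1 * W'.2 + β y.1 W'.1) h4]
  simp [smul_eq_mul]
  ring

lemma dform_udtβ {u : S → ℝ} (hu : Differentiable ℝ u)
    {β : S → S →L[ℝ] ℝ} (hβ : Differentiable ℝ β) (z W W' : S × ℝ) :
    dform (udtβ u β) z W W' =
      (fderiv ℝ u z.1 W.1 * W'.2 - fderiv ℝ u z.1 W'.1 * W.2)
      + dform β z.1 W.1 W'.1 := by
  unfold dform
  rw [fderiv_udtβ_eval hu hβ, fderiv_udtβ_eval hu hβ]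
  ring

lemma fderiv_invu_beta {u : S → ℝ} (hu : Differentiable ℝ u)
    {β : S → S →L[ℝ] ℝ} (hβ : Differentiable ℝ β)
    {x : S} (hx : u x ≠ 0) (w v : S) :
    fderiv ℝ (fun y => (u y)⁻¹ * β y w) x v =
      (u x)⁻¹ * fderiv ℝ (fun y => β y w) x v
        - β x w * ((u x)⁻¹ * fderiv ℝ u x v * (u x)⁻¹) := by
  have h1 : HasFDerivAt (fun y => (u y)⁻¹)
      ((-ContinuousLinearMap.mulLeftRight ℝ ℝ (u x)⁻¹ (u x)⁻¹).comp (fderiv ℝ u x)) x :=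
    (hasFDerivAt_inv' hx).comp x (hu x).hasFDerivAt
  have h2 : HasFDerivAt (fun y => β y w) (fderiv ℝ (fun y => β y w) x) x :=
    (diff_beta_apply hβ w x).hasFDerivAt
  rw [HasFDerivAt.fderiv (f := fun y => (u y)⁻¹ * β y w) (h1.mul h2)]
  simp [smul_eq_mul, ContinuousLinearMap.mulLeftRight_apply]
  ring

end Aux

theorem abstract_convex_surface_invariant_contact
    (n : ℕ) (S : Type*) [NormedAddCommGroup S] [NormedSpace ℝ S] [FiniteDimensional ℝ S]
    (hS : Module.finrank ℝ S = 2 * n)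
    (u : S → ℝ) (husm : ContDiff ℝ (⊤ : ℕ∞) u)
    (β : S → S →L[ℝ] ℝ) (hβsm : ContDiff ℝ (⊤ : ℕ∞) β)
    (hreg : ∀ x, u x = 0 → fderiv ℝ u x ≠ 0)
    (hΓcontact : ∀ x, u x = 0 →
      (∃ w, fderiv ℝ u x w = 0 ∧ β x w ≠ 0) ∧
      (∀ w, fderiv ℝ u x w = 0 → β x w = 0 → w ≠ 0 →
        ∃ w', fderiv ℝ u x w' = 0 ∧ β x w' = 0 ∧ dform β x w w' ≠ 0))
    (hsymp : ∀ x, u x ≠ 0 → ∀ w, w ≠ 0 →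
      ∃ w', (fderiv ℝ (fun y => (u y)⁻¹ * β y w') x w
              - fderiv ℝ (fun y => (u y)⁻¹ * β y w) x w') ≠ 0) :
    (∀ z : S × ℝ, udtβ u β z ≠ 0 ∧
      ∀ w, udtβ u β z w = 0 → w ≠ 0 →
        ∃ w', udtβ u β z w' = 0 ∧ dform (udtβ u β) z w w' ≠ 0) ∧
    (∀ (p : S) (t t' : ℝ), udtβ u β (p, t) = udtβ u β (p, t')) ∧
    (∀ (p : S) (t : ℝ) (w : S), udtβ u β (p, t) (w, 0) = β p w) ∧
    (∀ (p : S) (t : ℝ), udtβ u β (p, t) (0, 1) = u p) := by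
  have hu : Differentiable ℝ u := husm.differentiable (by simp)
  have hβ : Differentiable ℝ β := hβsm.differentiable (by simp)
  refine ⟨?_, ?_, ?_, ?_⟩
  · intro z
    obtain ⟨p, t⟩ := z
    constructor
    · -- α ≠ 0
      by_cases hup : u p = 0
      · obtain ⟨⟨w, _, hwβ⟩, -⟩ := hΓcontact p hup
        intro h
        apply hwβ
        have := congrFun (congrArg DFunLike.coe h) (w, 0)
        simpa [udtβ_apply, hup] using this
      · intro h
        apply hup
        have := congrFun (congrArg DFunLike.coe h) ((0 : S), (1 : ℝ))
        simpa [udtβ_apply] using this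
    · rintro ⟨v, s⟩ hker hne
      rw [udtβ_apply] at hker
      simp only at hker
      by_cases hup : u p = 0
      · -- on Γ
        rw [hup, zero_mul, zero_add] at hker
        by_cases hduv : fderiv ℝ u p v = 0
        · by_cases hv : v = 0
          · -- v = 0, s ≠ 0
            have hs : s ≠ 0 := by
              intro hs0; exact hne (by simp [hv, hs0])
            obtain ⟨⟨w, hwdu, hwβ⟩, -⟩ := hΓcontact p hup
            obtain ⟨v0, hv0⟩ : ∃ v0, fderiv ℝ u p v0 ≠ 0 := by
              by_contra hc
              push_neg at hc
              exact hreg p hup (ContinuousLinearMap.ext fun x => by simp [hc x])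
            set v' := v0 - (β p v0 / β p w) • w with hv'def
            have hβv' : β p v' = 0 := by
              simp [hv'def, map_sub, map_smul, smul_eq_mul]
              field_simp
              ring
            have hduv' : fderiv ℝ u p v' ≠ 0 := by
              simp [hv'def, map_sub, map_smul, smul_eq_mul, hwdu]
              exact hv0
            refine ⟨(v', 0), ?_, ?_⟩
            · rw [udtβ_apply]; simp [hup, hβv']
            · rw [dform_udtβ hu hβ]
              have hd0 : dform β p v v' = 0 := by
                unfold dform
                rw [hv]
                have : (fun y => β y (0 : S)) = fun _ => (0 : ℝ) := by
                  funext y; simp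
                simp [this]
              simp only [hv] at hd0 ⊢
              simp [hd0, hduv']
              exact hs
          · -- v ≠ 0 in the contact distribution
            obtain ⟨-, h2⟩ := hΓcontact p hup
            obtain ⟨v', hduv', hβv', hdβ⟩ := h2 v hduv hker hv
            refine ⟨(v', 0), ?_, ?_⟩
            · rw [udtβ_apply]; simp [hup, hβv']
            · rw [dform_udtβ hu hβ]
              simpa [hduv', hduv] using hdβ
        · -- du(v) ≠ 0 : pair with ∂/∂t
          refine ⟨((0 : S), (1 : ℝ)), ?_, ?_⟩
          · rw [udtβ_apply]; simp [hup]
          · rw [dform_udtβ hu hβ]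
            have hd0 : dform β p v 0 = 0 := by
              unfold dform
              have : (fun y => β y (0 : S)) = fun _ => (0 : ℝ) := by
                funext y; simp
              simp [this]
            simpa [hd0] using hduv
      · -- off Γ : symplectic case
        have hv : v ≠ 0 := by
          intro hv0
          rw [hv0] at hker
          simp at hker
          rcases hker with h | h
          · exact hup h
          · exact hne (by simp [hv0, h])
        obtain ⟨w', hw'⟩ := hsymp p hup v hv
        rw [fderiv_invu_beta hu hβ hup, fderiv_invu_beta hu hβ hup] at hw'
        refine ⟨(w', -(β p w' / u p)), ?_, ?_⟩
        · rw [udtβ_apply]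
          simp only
          field_simp
          ring
        · have hs : s = -(β p v / u p) := by
            field_simp
            linarith [hker]
          rw [dform_udtβ hu hβ]
          have key : (fderiv ℝ u p (v, s).1 * (w', -(β p w' / u p)).2 -
                fderiv ℝ u p (w', -(β p w' / u p)).1 * (v, s).2) +
                dform β p (v, s).1 (w', -(β p w' / u p)).1
              = u p * ((u p)⁻¹ * (fderiv ℝ (fun y => β y w') p) v -
                  (β p) w' * ((u p)⁻¹ * (fderiv ℝ u p) v * (u p)⁻¹) -
                ((u p)⁻¹ * (fderiv ℝ (fun y => β y v) p) w' -
                  (β p) v * ((u p)⁻¹ * (fderiv ℝ u p) w' * (u p)⁻¹))) := by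
            simp only
            rw [hs]
            unfold dform
            field_simp
            ring
          rw [key]
          exact mul_ne_zero hup hw'
  · intro p t t'
    rfl
  · intro p t w
    rw [udtβ_apply]; simp
  · intro p t
    rw [udtβ_apply]; simp
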